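/- If φ: ℝ → ℝ is twice differentiable and satisfies the ODE (φ'' + φ')² + εφ' = 0 with ε ∈ {1,-1}, then u(t,x) = φ(x + εt) satisfies the PDE u_t + (u_x + u_xx)² = 0. Moreover, for any real constants c1, c2, the function φ(ξ) = c1 - εξ + 4δc2·e^{-ξ/2} + εc2²·e^{-ξ} with δ ∈ {1,-1} satisfies this ODE. -/

import Mathlib

/-
For `u(t, x) = φ(x + εt)` the chain rule gives `u_t = ε φ'`, `u_x = φ'`, `u_xx = φ''` at
`ξ = x + εt`, so the PDE residual is literally the ODE residual. For the explicit profile one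
finds `φ'' + φ' = -ε - δ c₂ e^{-ξ/2}`, and the ODE residual collapses to
`(δ² - ε²) c₂² e^{-ξ}`, which vanishes because `δ² = ε² = 1`.
-/

open Real

theorem deriv_comp_const_add_mul (φ : ℝ → ℝ) (x ε t : ℝ) :
    deriv (fun s => φ (x + ε * s)) t = ε * deriv φ (x + ε * t) := by
  rw [deriv_comp_mul_left ε (fun u => φ (x + u)) t, deriv_comp_const_add, smul_eq_mul]

theorem travelingWave_pde_residual_eq (φ : ℝ → ℝ) (ε t x : ℝ) :
    deriv (fun s => φ (x + ε * s)) t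
        + (deriv (fun y => φ (y + ε * t)) x
          + deriv (fun y => deriv (fun z => φ (z + ε * t)) y) x) ^ 2
      = (deriv (deriv φ) (x + ε * t) + deriv φ (x + ε * t)) ^ 2
          + ε * deriv φ (x + ε * t) := by
  simp only [deriv_comp_const_add_mul, deriv_comp_add_const]
  ring

theorem hasDerivAt_exp_neg_div_two (s : ℝ) :
    HasDerivAt (fun s => exp (-s / 2)) (-exp (-s / 2) / 2) s := by
  simpa [neg_div, div_eq_mul_inv] using ((hasDerivAt_id s).neg.div_const 2).exp

theorem hasDerivAt_exp_neg (s : ℝ) :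
    HasDerivAt (fun s => exp (-s)) (-exp (-s)) s := by
  simpa using (hasDerivAt_id s).neg.exp

theorem exp_neg_eq_sq_exp_neg_div_two (s : ℝ) : exp (-s) = exp (-s / 2) ^ 2 := by
  rw [sq, ← exp_add, add_halves]

section Profile

variable (ε δ c1 c2 : ℝ)

theorem hasDerivAt_profile (s : ℝ) :
    HasDerivAt (fun s => c1 - ε * s + 4 * δ * c2 * exp (-s / 2) + ε * c2 ^ 2 * exp (-s))
      (-ε - 2 * δ * c2 * exp (-s / 2) - ε * c2 ^ 2 * exp (-s)) s := by
  have h := ((((hasDerivAt_id s).const_mul ε).const_sub c1).add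
    ((hasDerivAt_exp_neg_div_two s).const_mul (4 * δ * c2))).add
    ((hasDerivAt_exp_neg s).const_mul (ε * c2 ^ 2))
  exact h.congr_deriv (by ring)

theorem hasDerivAt_profile_deriv (s : ℝ) :
    HasDerivAt (fun s => -ε - 2 * δ * c2 * exp (-s / 2) - ε * c2 ^ 2 * exp (-s))
      (δ * c2 * exp (-s / 2) + ε * c2 ^ 2 * exp (-s)) s := by
  have h := (((hasDerivAt_exp_neg_div_two s).const_mul (2 * δ * c2)).const_sub (-ε)).sub
    ((hasDerivAt_exp_neg s).const_mul (ε * c2 ^ 2))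
  exact h.congr_deriv (by ring)

theorem deriv_profile :
    deriv (fun s => c1 - ε * s + 4 * δ * c2 * exp (-s / 2) + ε * c2 ^ 2 * exp (-s))
      = fun s => -ε - 2 * δ * c2 * exp (-s / 2) - ε * c2 ^ 2 * exp (-s) :=
  funext fun s => (hasDerivAt_profile ε δ c1 c2 s).deriv

end Profile

theorem stmt18 (ε δ : ℝ) (hε : ε = 1 ∨ ε = -1) (hδ : δ = 1 ∨ δ = -1) :
    (∀ φ : ℝ → ℝ, Differentiable ℝ φ → Differentiable ℝ (deriv φ) →
      (∀ ξ : ℝ, (deriv (deriv φ) ξ + deriv φ ξ) ^ 2 + ε * deriv φ ξ = 0) →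
      ∀ t x : ℝ,
        deriv (fun s => φ (x + ε * s)) t
          + (deriv (fun y => φ (y + ε * t)) x
             + deriv (fun y => deriv (fun z => φ (z + ε * t)) y) x) ^ 2 = 0) ∧
    (∀ c1 c2 : ℝ, ∀ ξ : ℝ,
      (deriv (deriv (fun s : ℝ => c1 - ε * s + 4 * δ * c2 * Real.exp (-s / 2)
          + ε * c2 ^ 2 * Real.exp (-s))) ξ
        + deriv (fun s : ℝ => c1 - ε * s + 4 * δ * c2 * Real.exp (-s / 2)
          + ε * c2 ^ 2 * Real.exp (-s)) ξ) ^ 2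
      + ε * deriv (fun s : ℝ => c1 - ε * s + 4 * δ * c2 * Real.exp (-s / 2)
          + ε * c2 ^ 2 * Real.exp (-s)) ξ = 0) := by
  refine ⟨fun φ _ _ hode t x => (travelingWave_pde_residual_eq φ ε t x).trans (hode _),
    fun c1 c2 ξ => ?_⟩
  have hδε : δ ^ 2 = ε ^ 2 := by
    rcases hε with rfl | rfl <;> rcases hδ with rfl | rfl <;> norm_num
  rw [deriv_profile, (hasDerivAt_profile_deriv ε δ c2 ξ).deriv]
  beta_reduce
  rw [exp_neg_eq_sq_exp_neg_div_two]
  linear_combination c2 ^ 2 * exp (-ξ / 2) ^ 2 * hδε
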